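/- For every integer n > 1, the identity \((1+q^{2n})\binom{2n-1}{n-1}_{q^2} = \binom{2n}{n}_{q^2}\) holds, and if n is odd then \(\binom{2n-1}{n-1}_{q^2} \equiv (-1)^{n-1} q^{n(n-1)} \pmod{\Phi_n(q^2)}\) in \(\mathbb{Z}[q]\). -/

import Mathlib

open Finset Polynomial

/-- `(Q; Q)_m = ∏_{j=1}^{m} (1 - Q^j)` with `Q = X^2`, in `ℤ[X]`. -/
noncomputable def pp (m : ℕ) : Polynomial ℤ :=
  ∏ j ∈ Finset.range m, (1 - (X : Polynomial ℤ) ^ (2 * (j + 1)))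

/-!
Work with the Gaussian binomials `[m, k]` in a variable `Q` and substitute `Q = X²` at the end.
The q-Pascal recursion gives `[k + d, k] (Q;Q)_k (Q;Q)_d = (Q;Q)_{k+d}`, from which the identity
`[2n, n] = (1 + Q^n) [2n - 1, n - 1]` follows by cancelling. For the congruence,
`[k + n, k] (Q;Q)_k = ∏_{i<k} (1 - Q^{n+i+1}) ≡ (Q;Q)_k` modulo `Q^n - 1`; as `Φ_n` is prime in
`ℤ[Q]` and divides no factor `1 - Q^j` with `0 < j < n`, it divides `[k + n, k] - 1` whenever
`k < n`. For odd `n` finally `(-1)^(n-1) = 1` and `X^(n(n-1)) = (X^(2n))^((n-1)/2) ≡ 1`.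
-/

theorem dvd_prod_sub_prod {ι R : Type*} [CommRing R] {a : R} (s : Finset ι) {f g : ι → R}
    (h : ∀ i ∈ s, a ∣ f i - g i) : a ∣ ∏ i ∈ s, f i - ∏ i ∈ s, g i := by
  simp only [← Ideal.mem_span_singleton, ← Ideal.Quotient.eq, map_prod] at h ⊢
  exact prod_congr rfl h

section QAnalogues

variable (R : Type*) [CommRing R]

noncomputable def qPochhammer (m : ℕ) : R[X] :=
  ∏ j ∈ range m, (1 - X ^ (j + 1))

noncomputable def qBinomial : ℕ → ℕ → R[X]
  | _, 0 => 1
  | 0, _ + 1 => 0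
  | m + 1, k + 1 => qBinomial m k + X ^ (k + 1) * qBinomial m (k + 1)

variable {R}

theorem qPochhammer_succ (m : ℕ) :
    qPochhammer R (m + 1) = qPochhammer R m * (1 - X ^ (m + 1)) :=
  prod_range_succ _ _

theorem qPochhammer_add (m d : ℕ) :
    qPochhammer R (m + d) = qPochhammer R m * ∏ i ∈ range d, (1 - X ^ (m + i + 1)) := by
  simp only [qPochhammer, prod_range_add, add_assoc]

theorem qPochhammer_ne_zero [Nontrivial R] (m : ℕ) : qPochhammer R m ≠ 0 := by
  intro h
  simpa [qPochhammer, eval_prod] using congrArg (eval 0) h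

theorem qBinomial_eq_zero_of_lt : ∀ {m k : ℕ}, m < k → qBinomial R m k = 0
  | 0, _ + 1, _ => rfl
  | m + 1, k + 1, h => by
    simp [qBinomial, qBinomial_eq_zero_of_lt (Nat.lt_of_succ_lt_succ h),
      qBinomial_eq_zero_of_lt (Nat.lt_of_succ_lt h)]

theorem qBinomial_self : ∀ m : ℕ, qBinomial R m m = 1
  | 0 => rfl
  | m + 1 => by simp [qBinomial, qBinomial_self m, qBinomial_eq_zero_of_lt (Nat.lt_succ_self m)]

theorem qBinomial_mul_qPochhammer : ∀ k d : ℕ,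
    qBinomial R (k + d) k * (qPochhammer R k * qPochhammer R d) = qPochhammer R (k + d)
  | 0, d => by simp [qBinomial, qPochhammer]
  | k + 1, 0 => by simp [qBinomial_self, qPochhammer]
  | k + 1, d + 1 => by
    have h₁ := qBinomial_mul_qPochhammer k (d + 1)
    have h₂ := qBinomial_mul_qPochhammer (k + 1) d
    rw [show k + (d + 1) = k + d + 1 by omega] at h₁
    rw [show k + 1 + (d + 1) = k + d + 1 + 1 by omega, qBinomial, qPochhammer_succ k,
      qPochhammer_succ d, qPochhammer_succ (k + d + 1)]
    rw [qPochhammer_succ d] at h₁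
    rw [qPochhammer_succ k, show k + 1 + d = k + d + 1 by omega] at h₂
    linear_combination (1 - (X : R[X]) ^ (k + 1)) * h₁ +
      X ^ (k + 1) * (1 - (X : R[X]) ^ (d + 1)) * h₂

theorem qBinomial_succ_add_succ [IsDomain R] (m : ℕ) :
    qBinomial R (m + 1 + (m + 1)) (m + 1) = (1 + X ^ (m + 1)) * qBinomial R (m + (m + 1)) m := by
  apply mul_right_cancel₀ (mul_ne_zero (qPochhammer_ne_zero (m + 1)) (qPochhammer_ne_zero (m + 1)))
  rw [qBinomial_mul_qPochhammer, show m + 1 + (m + 1) = m + (m + 1) + 1 by omega,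
    qPochhammer_succ, ← qBinomial_mul_qPochhammer m (m + 1), qPochhammer_succ m]
  ring

end QAnalogues

theorem prime_cyclotomic {n : ℕ} (hn : 0 < n) : Prime (cyclotomic n ℤ) :=
  UniqueFactorizationMonoid.irreducible_iff_prime.mp (cyclotomic.irreducible hn)

theorem dvd_of_cyclotomic_dvd_X_pow_sub_one {n k : ℕ} (hn : 0 < n)
    (h : cyclotomic n ℤ ∣ X ^ k - 1) : n ∣ k := by
  have hζ := Complex.isPrimitiveRoot_exp n hn.ne'
  refine hζ.dvd_of_pow_eq_one k ?_
  have hdvd : cyclotomic n ℂ ∣ X ^ k - 1 := by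
    simpa using map_dvd (mapRingHom (Int.castRingHom ℂ)) h
  simpa [sub_eq_zero] using (hζ.isRoot_cyclotomic hn).dvd hdvd

theorem not_cyclotomic_dvd_qPochhammer {n k : ℕ} (hk : k < n) :
    ¬ cyclotomic n ℤ ∣ qPochhammer ℤ k := by
  intro h
  obtain ⟨j, hj, hdvd⟩ := (prime_cyclotomic (by omega)).exists_mem_finset_dvd h
  have hnj : n ∣ j + 1 :=
    dvd_of_cyclotomic_dvd_X_pow_sub_one (by omega) (dvd_neg.mp (by simpa using hdvd))
  have := Nat.le_of_dvd j.succ_pos hnj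
  simp only [mem_range] at hj
  omega

theorem cyclotomic_dvd_qBinomial_sub_one {n k : ℕ} (hk : k < n) :
    cyclotomic n ℤ ∣ qBinomial ℤ (k + n) k - 1 := by
  have hprod : qBinomial ℤ (k + n) k * qPochhammer ℤ k = ∏ i ∈ range k, (1 - X ^ (n + i + 1)) := by
    apply mul_right_cancel₀ (qPochhammer_ne_zero (R := ℤ) n)
    rw [mul_assoc, qBinomial_mul_qPochhammer, add_comm, qPochhammer_add, mul_comm]
  have hcong : (X : ℤ[X]) ^ n - 1 ∣ ∏ i ∈ range k, (1 - X ^ (n + i + 1)) - qPochhammer ℤ k :=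
    dvd_prod_sub_prod _ fun i _ => ⟨-X ^ (i + 1), by ring⟩
  have h : cyclotomic n ℤ ∣ (qBinomial ℤ (k + n) k - 1) * qPochhammer ℤ k := by
    rw [sub_one_mul, hprod]
    exact (cyclotomic.dvd_X_pow_sub_one n ℤ).trans hcong
  exact ((prime_cyclotomic (by omega)).dvd_or_dvd h).resolve_right
    (not_cyclotomic_dvd_qPochhammer hk)

theorem pp_eq_expand_qPochhammer (m : ℕ) : pp m = expand ℤ 2 (qPochhammer ℤ m) := by
  simp [pp, qPochhammer, map_prod, pow_mul]

theorem expand_cyclotomic_dvd_X_pow_mul_pred_sub_one {n : ℕ} (hn : Odd n) :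
    expand ℤ 2 (cyclotomic n ℤ) ∣ X ^ (n * (n - 1)) - 1 := by
  obtain ⟨t, rfl⟩ := hn
  have h := map_dvd (expand ℤ 2)
    ((cyclotomic.dvd_X_pow_sub_one (2 * t + 1) ℤ).trans (pow_one_sub_dvd_pow_mul_sub_one X _ t))
  rwa [map_sub, map_pow, map_one, expand_X, ← pow_mul,
    show 2 * ((2 * t + 1) * t) = (2 * t + 1) * (2 * t + 1 - 1) by rw [Nat.add_sub_cancel]; ring] at h

theorem stmt_16 (n : ℕ) (hn : 1 < n) :
    ∃ B₁ B₂ : Polynomial ℤ,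
      B₁ * (pp (n - 1) * pp n) = pp (2 * n - 1) ∧
      B₂ * (pp n) ^ 2 = pp (2 * n) ∧
      (1 + (X : Polynomial ℤ) ^ (2 * n)) * B₁ = B₂ ∧
      (Odd n →
        (Polynomial.cyclotomic n ℤ).comp ((X : Polynomial ℤ) ^ 2) ∣
          B₁ - (-1) ^ (n - 1) * X ^ (n * (n - 1))) := by
  obtain ⟨m, rfl⟩ : ∃ m, n = m + 1 := ⟨n - 1, by omega⟩
  rw [Nat.add_sub_cancel, show 2 * (m + 1) - 1 = m + (m + 1) by omega, two_mul]
  refine ⟨expand ℤ 2 (qBinomial ℤ (m + (m + 1)) m),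
    expand ℤ 2 (qBinomial ℤ (m + 1 + (m + 1)) (m + 1)), ?_, ?_, ?_, fun hodd => ?_⟩
  · simp only [pp_eq_expand_qPochhammer, ← map_mul, qBinomial_mul_qPochhammer]
  · simp only [pp_eq_expand_qPochhammer, ← map_mul, sq, qBinomial_mul_qPochhammer]
  · rw [qBinomial_succ_add_succ, map_mul, map_add, map_one, map_pow, expand_X, ← pow_mul, two_mul]
  · have hB := map_dvd (expand ℤ 2) (cyclotomic_dvd_qBinomial_sub_one m.lt_add_one)
    have hX := expand_cyclotomic_dvd_X_pow_mul_pred_sub_one hodd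
    rw [map_sub, map_one] at hB
    rw [Nat.add_sub_cancel] at hX
    have hm : Even m := Nat.not_odd_iff_even.mp (Nat.odd_add_one.mp hodd)
    rw [← expand_eq_comp_X_pow, hm.neg_one_pow, one_mul, ← sub_sub_sub_cancel_right _ _ 1]
    exact dvd_sub hB hX
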